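/- arXiv:1912.04600 — 3 statements merged into one kernel-verified Lean document; each statement's English description precedes it below -/
import Mathlib

section
/- Let n ≥ 5 be an odd integer, p an odd prime number, P = p or 2p, ι = 1 or 2, and let b_1, …, b_{(n−3)/2}, c_1, …, c_{(n−3)/2}, L be integers satisfying: (1) if P is even, then L ≡ ∏_j b_j² ≡ 1 (mod 2); (2) if P ≢ ±1 (mod 9), then L ≡ ∏_j b_j² ≢ 0 (mod 3) and Σ_j b_j^{−1}c_j ≢ 0 (mod 3), where b_j^{−1} denotes an inverse of b_j modulo 3; (3) if p ≡ 2 (mod 3), then L ≡ ∏_j b_j² ≢ 0 (mod p) and Σ_j b_j^{−1}c_j ≢ 0 (mod p), where b_j^{−1} denotes an inverse of b_j modulo p. Then the equation (X³ + P^ι Y³)·∏_{j=1}^{(n−3)/2}(b_j²X² + b_j c_j XY + c_j²Y²) − L Z^n = 0 has solutions other than (0,0,0) over ℝ and over the l-adic field ℚ_l for every prime number l. -/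
/-- The value `F(X,Y,Z) = (X³+aY³) ∏_j (b_j²X² + b_j c_j XY + c_j² Y²) - L Z^n`
in a commutative ring `K`. -/
def EqnHolds {K : Type} [CommRing K] (a L : ℤ) (n : ℕ) {m : ℕ} (b c : Fin m → ℤ)
    (X Y Z : K) : Prop :=
  (X ^ 3 + (a : K) * Y ^ 3) *
      ∏ j : Fin m, ((b j : K) ^ 2 * X ^ 2 + (b j : K) * (c j : K) * X * Y
        + (c j : K) ^ 2 * Y ^ 2)
    = (L : K) * Z ^ n

/-!
Over `ℝ`, and over `ℚ_l` for `l = 3` with `P ≡ ±1 (mod 9)` or for `l ≡ 2 (mod 3)` with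
`l ∤ P`, the cubic factor `X³ + P^ι Y³` has a nontrivial zero, so `Z = 0` gives a solution.
For `l ≡ 1 (mod 3)` a primitive cube root of unity `ω ∈ ℚ_l` is a zero of the quadratic factor
at `(X, Y) = (c_j ω, b_j)`. In the remaining cases (`l = 3` with `P ≢ ±1 (mod 9)`, `l = p`
with `p ≡ 2 (mod 3)`, and `l = 2 ∣ P`) the hypotheses of the theorem say precisely that
Hensel's lemma applies to `F(1, ε, 1)` at `ε = 0`, or to `F(1, 0, z)` at `z = 1`.
-/

open Polynomial

theorem Int.pow_modEq_one_or_neg_one {x m : ℤ} (h : x ≡ 1 [ZMOD m] ∨ x ≡ -1 [ZMOD m]) (k : ℕ) :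
    x ^ k ≡ 1 [ZMOD m] ∨ x ^ k ≡ -1 [ZMOD m] := by
  rcases h with h | h
  · exact .inl (by simpa using h.pow k)
  · rcases neg_one_pow_eq_or ℤ k with hk | hk
    · exact .inl (hk ▸ h.pow k)
    · exact .inr (hk ▸ h.pow k)

theorem Int.exists_pow_three_add_dvd_of_modEq_nine {a : ℤ} (h : a ≡ 1 [ZMOD 9] ∨ a ≡ -1 [ZMOD 9]) :
    ∃ x : ℤ, 27 ∣ x ^ 3 + a ∧ ¬ 3 ∣ x := by
  rcases h with h | h <;> obtain ⟨k, hk⟩ := h.symm.dvd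
  -- `(1 + 3k)³ ≡ 1 + 9k (mod 27)`
  · exact ⟨-1 - 3 * k, ⟨-k ^ 2 - k ^ 3, by linear_combination hk⟩, by omega⟩
  · exact ⟨1 - 3 * k, ⟨k ^ 2 - k ^ 3, by linear_combination hk⟩, by omega⟩

theorem Finset.sum_mul_prod_erase_sq {K ι : Type*} [Field K] [DecidableEq ι] (s : Finset ι)
    (b c : ι → K) (hb : ∀ j ∈ s, b j ≠ 0) :
    ∑ j ∈ s, (∏ k ∈ s.erase j, b k ^ 2) * (b j * c j) =
      (∑ j ∈ s, (b j)⁻¹ * c j) * ∏ j ∈ s, b j ^ 2 := by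
  rw [Finset.sum_mul]
  refine Finset.sum_congr rfl fun j hj => ?_
  rw [← Finset.mul_prod_erase s (fun k => b k ^ 2) hj]
  field_simp [hb j hj]

theorem Real.exists_pow_eq_of_odd {n : ℕ} (hn : Odd n) (y : ℝ) : ∃ z : ℝ, z ^ n = y := by
  have hn0 : n ≠ 0 := hn.pos.ne'
  rcases le_total 0 y with hy | hy
  · exact ⟨y ^ (n : ℝ)⁻¹, rpow_inv_natCast_pow hy hn0⟩
  · refine ⟨-(-y) ^ (n : ℝ)⁻¹, ?_⟩
    rw [hn.neg_pow, rpow_inv_natCast_pow (neg_nonneg.2 hy) hn0, neg_neg]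

namespace ZMod
variable {l : ℕ} [Fact l.Prime]

theorem three_ne_zero_of_mod_three_ne_zero (hl : l % 3 ≠ 0) : (3 : ZMod l) ≠ 0 := by
  have h1 := (Fact.out : l.Prime).one_lt
  intro h
  have := (Nat.dvd_prime Nat.prime_three).1 ((natCast_eq_zero_iff 3 l).1 (by exact_mod_cast h))
  omega

theorem exists_pow_three_eq_of_mod_three_eq_two (hl : l % 3 = 2) (u : ZMod l) :
    ∃ x : ZMod l, x ^ 3 = u := by
  -- cubing is inverted by `u ↦ u ^ ((2l - 1) / 3)` because `u ^ l = u`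
  refine ⟨u ^ ((2 * l - 1) / 3), ?_⟩
  have hl1 : 1 ≤ l := (Fact.out : l.Prime).one_le
  calc (u ^ ((2 * l - 1) / 3)) ^ 3 = u ^ (l - 1) * u ^ l := by
        rw [← pow_mul, ← pow_add]; congr 1; omega
    _ = u := by rw [pow_card, ← pow_succ, Nat.sub_add_cancel hl1, pow_card]

theorem exists_sq_add_self_add_one_eq_zero (hl : l % 3 = 1) :
    ∃ ω : ZMod l, ω ^ 2 + ω + 1 = 0 := by
  have : Fact (Nat.Prime 3) := ⟨Nat.prime_three⟩
  obtain ⟨g, hg⟩ := exists_prime_orderOf_dvd_card (G := (ZMod l)ˣ) 3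
    (by rw [card_units]; omega)
  have hω : IsPrimitiveRoot (g : ZMod l) 3 :=
    IsPrimitiveRoot.coe_units_iff.2 (hg ▸ IsPrimitiveRoot.orderOf g)
  have hsum := hω.geom_sum_eq_zero (by norm_num)
  simp only [Finset.sum_range_succ, Finset.sum_range_zero] at hsum
  exact ⟨g, by linear_combination hsum⟩

end ZMod

namespace PadicInt
variable {l : ℕ} [Fact l.Prime]

theorem toZMod_eq_zero_iff_norm_lt_one {x : ℤ_[l]} : toZMod x = 0 ↔ ‖x‖ < 1 := by
  rw [← RingHom.mem_ker, ker_toZMod, IsLocalRing.mem_maximalIdeal, mem_nonunits]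

theorem exists_aeval_eq_zero_of_simple_root (F : ℤ[X]) {x₀ : ZMod l} (h0 : aeval x₀ F = 0)
    (h1 : aeval x₀ (derivative F) ≠ 0) : ∃ z : ℤ_[l], aeval z F = 0 := by
  have hlift (G : ℤ[X]) : toZMod (aeval (x₀.val : ℤ_[l]) G) = aeval x₀ G := by
    rw [← RingHom.toIntAlgHom_apply, ← aeval_algHom_apply]
    simp
  have hnorm0 : ‖aeval (x₀.val : ℤ_[l]) F‖ < 1 := by
    rw [← toZMod_eq_zero_iff_norm_lt_one, hlift, h0]
  have hnorm1 : ‖aeval (x₀.val : ℤ_[l]) (derivative F)‖ = 1 :=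
    (norm_le_one _).antisymm (not_lt.1 fun h => h1 (by
      rwa [← toZMod_eq_zero_iff_norm_lt_one, hlift] at h))
  obtain ⟨z, hz, -⟩ := hensels_lemma (F := F) (by rwa [hnorm1, one_pow])
  exact ⟨z, hz⟩

theorem exists_sq_add_self_add_one_eq_zero (hl : l % 3 = 1) :
    ∃ t : ℤ_[l], t ^ 2 + t + 1 = 0 := by
  obtain ⟨ω, hω⟩ := ZMod.exists_sq_add_self_add_one_eq_zero hl
  have h2ω : 2 * ω + 1 ≠ 0 := fun h => ZMod.three_ne_zero_of_mod_three_ne_zero (l := l)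
    (by omega) (by linear_combination 4 * hω - (2 * ω + 1) * h)
  obtain ⟨t, ht⟩ := exists_aeval_eq_zero_of_simple_root (X ^ 2 + X + 1) (x₀ := ω)
    (by simpa using hω) (by simpa [map_ofNat] using h2ω)
  exact ⟨t, by simpa using ht⟩

theorem exists_pow_three_add_eq_zero (hl : l % 3 = 2) {a : ℤ} (ha : (a : ZMod l) ≠ 0) :
    ∃ z : ℤ_[l], z ^ 3 + a = 0 := by
  obtain ⟨x, hx⟩ := ZMod.exists_pow_three_eq_of_mod_three_eq_two hl (-a)
  have hx0 : x ≠ 0 := by rintro rfl; exact ha (by linear_combination hx)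
  have h3 : (3 : ZMod l) ≠ 0 := ZMod.three_ne_zero_of_mod_three_ne_zero (by omega)
  obtain ⟨z, hz⟩ := exists_aeval_eq_zero_of_simple_root (X ^ 3 + C a) (x₀ := x)
    (by simp [hx]) (by simpa [map_ofNat] using ⟨h3, hx0⟩)
  exact ⟨z, by simpa using hz⟩

theorem exists_pow_three_add_eq_zero_of_modEq_nine {a : ℤ}
    (ha : a ≡ 1 [ZMOD 9] ∨ a ≡ -1 [ZMOD 9]) : ∃ z : ℤ_[3], z ^ 3 + a = 0 := by
  obtain ⟨x, hdvd, hx⟩ := Int.exists_pow_three_add_dvd_of_modEq_nine ha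
  have hF : aeval (x : ℤ_[3]) (X ^ 3 + C a) = ((x ^ 3 + a : ℤ) : ℤ_[3]) := by simp
  have hF' : aeval (x : ℤ_[3]) (derivative (X ^ 3 + C a)) = (3 : ℤ_[3]) * (x : ℤ_[3]) ^ 2 := by
    simp [map_ofNat]
  have hx1 : ‖(x : ℤ_[3])‖ = 1 :=
    (norm_le_one _).antisymm (not_lt.1 fun h => hx ((norm_int_lt_one_iff_dvd x).1 h))
  have hval : ‖aeval (x : ℤ_[3]) (X ^ 3 + C a)‖ ≤ 3 ^ (-3 : ℤ) := by
    rw [hF]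
    exact norm_int_le_pow_iff_dvd.2 (by norm_num [hdvd])
  have hder : ‖aeval (x : ℤ_[3]) (derivative (X ^ 3 + C a))‖ = 3⁻¹ := by
    rw [hF', norm_mul, norm_pow, hx1, one_pow, mul_one]
    exact_mod_cast norm_p
  -- `X³ + a` has no simple root mod 3, but `‖f x‖ ≤ 3⁻³ < 3⁻² = ‖f' x‖²` suffices for Hensel
  obtain ⟨z, hz, -⟩ := hensels_lemma (hval.trans_lt (by rw [hder]; norm_num))
  exact ⟨z, by simpa using hz⟩

end PadicInt

section SpecialZeros
variable {K : Type} [CommRing K] {a L : ℤ} {n m : ℕ} {b c : Fin m → ℤ}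

theorem eqnHolds_of_pow_three_add_eq_zero (hn : n ≠ 0) {z : K} (hz : z ^ 3 + a = 0) :
    EqnHolds a L n b c z 1 0 := by
  rw [EqnHolds, one_pow, mul_one, hz, zero_mul, zero_pow hn, mul_zero]

theorem eqnHolds_of_sq_add_self_add_one_eq_zero (hn : n ≠ 0) (j : Fin m) {t : K}
    (ht : t ^ 2 + t + 1 = 0) : EqnHolds a L n b c (c j * t) (b j) 0 := by
  rw [EqnHolds, zero_pow hn, mul_zero]
  refine mul_eq_zero_of_right _ (Finset.prod_eq_zero (Finset.mem_univ j) ?_)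
  linear_combination ((b j : K) ^ 2 * (c j : K) ^ 2) * ht

theorem eqnHolds_of_eq_zero (hn : n ≠ 0) {j : Fin m} (hj : (b j : K) = 0) :
    EqnHolds a L n b c (1 : K) 0 0 := by
  rw [EqnHolds, zero_pow hn, mul_zero]
  exact mul_eq_zero_of_right _ (Finset.prod_eq_zero (Finset.mem_univ j) (by simp [hj]))

end SpecialZeros

def HasNontrivialZero (K : Type) [CommRing K] (a L : ℤ) (n : ℕ) {m : ℕ} (b c : Fin m → ℤ) : Prop :=
  ∃ X Y Z : K, (X, Y, Z) ≠ (0, 0, 0) ∧ EqnHolds a L n b c X Y Z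

theorem HasNontrivialZero.map {K K' : Type} [CommRing K] [CommRing K'] {a L : ℤ} {n m : ℕ}
    {b c : Fin m → ℤ} (h : HasNontrivialZero K a L n b c) {f : K →+* K'}
    (hf : Function.Injective f) : HasNontrivialZero K' a L n b c := by
  obtain ⟨X, Y, Z, hne, hXYZ⟩ := h
  refine ⟨f X, f Y, f Z, ?_, ?_⟩
  · simpa [map_eq_zero_iff f hf] using hne
  · simpa [EqnHolds, map_prod] using congrArg f hXYZ

section NontrivialZeros
variable {K : Type} [CommRing K] [Nontrivial K] {a L : ℤ} {n m : ℕ} {b c : Fin m → ℤ}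

theorem hasNontrivialZero_of_pow_three_add_eq_zero (hn : n ≠ 0) {z : K} (hz : z ^ 3 + a = 0) :
    HasNontrivialZero K a L n b c :=
  ⟨z, 1, 0, by simp, eqnHolds_of_pow_three_add_eq_zero hn hz⟩

theorem hasNontrivialZero_of_sq_add_self_add_one_eq_zero (hn : n ≠ 0) (hm : 0 < m) {t : K}
    (ht : t ^ 2 + t + 1 = 0) : HasNontrivialZero K a L n b c := by
  let j : Fin m := ⟨0, hm⟩
  by_cases hj : (b j : K) = 0
  · exact ⟨1, 0, 0, by simp, eqnHolds_of_eq_zero hn hj⟩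
  · exact ⟨c j * t, b j, 0, by simp [hj], eqnHolds_of_sq_add_self_add_one_eq_zero hn j ht⟩

end NontrivialZeros

namespace PadicInt
variable {l : ℕ} [Fact l.Prime] {a L : ℤ} {n m : ℕ} {b c : Fin m → ℤ}

theorem hasNontrivialZero_of_prod_sq_ne_zero (hn : (n : ZMod l) ≠ 0)
    (hL : (L : ZMod l) = ∏ j, (b j : ZMod l) ^ 2) (hB : ∏ j, (b j : ZMod l) ^ 2 ≠ 0) :
    HasNontrivialZero ℤ_[l] a L n b c := by
  have hder : aeval (1 : ZMod l) (derivative (C L * X ^ n - C (∏ j, b j ^ 2))) ≠ 0 := by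
    rw [derivative_sub, derivative_C, sub_zero, derivative_C_mul_X_pow]
    simpa [hL] using ⟨hB, hn⟩
  obtain ⟨z, hz⟩ := exists_aeval_eq_zero_of_simple_root _ (by simp [hL]) hder
  have hLz : (L : ℤ_[l]) * z ^ n = ∏ j, (b j : ℤ_[l]) ^ 2 := sub_eq_zero.1 (by simpa using hz)
  exact ⟨1, 0, z, by simp, by simpa [EqnHolds] using hLz.symm⟩

theorem hasNontrivialZero_of_sum_inv_mul_ne_zero (hL : (L : ZMod l) = ∏ j, (b j : ZMod l) ^ 2)
    (hB : ∏ j, (b j : ZMod l) ^ 2 ≠ 0) (hS : ∑ j, (b j : ZMod l)⁻¹ * c j ≠ 0) :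
    HasNontrivialZero ℤ_[l] a L n b c := by
  classical
  have hb : ∀ j ∈ Finset.univ, (b j : ZMod l) ≠ 0 := fun j _ hj =>
    hB (Finset.prod_eq_zero (Finset.mem_univ j) (by simp [hj]))
  set G : ℤ[X] :=
    (1 + C a * X ^ 3) * ∏ j, (C (b j ^ 2) + C (b j * c j) * X + C (c j ^ 2) * X ^ 2) - C L
  have hder : aeval (0 : ZMod l) (derivative G) ≠ 0 := by
    have hD := mul_ne_zero hS hB
    rw [← Finset.sum_mul_prod_erase_sq _ _ _ hb] at hD
    simpa [G, derivative_prod_finset, derivative_pow, derivative_intCast] using hD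
  obtain ⟨ε, hε⟩ := exists_aeval_eq_zero_of_simple_root G (by simp [G, hL]) hder
  refine ⟨1, ε, 1, by simp, ?_⟩
  simpa [EqnHolds, G, sub_eq_zero] using hε

theorem hasNontrivialZero_of_mod_three_eq_one (hl : l % 3 = 1) (hn : n ≠ 0) (hm : 0 < m) :
    HasNontrivialZero ℤ_[l] a L n b c :=
  let ⟨_, ht⟩ := exists_sq_add_self_add_one_eq_zero hl
  hasNontrivialZero_of_sq_add_self_add_one_eq_zero hn hm ht

theorem hasNontrivialZero_three {P ι : ℕ} (hn : n ≠ 0)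
    (h2 : ¬ (P % 9 = 1 ∨ P % 9 = 8) →
      (L : ZMod 3) = ∏ j, (b j : ZMod 3) ^ 2 ∧ (∏ j, (b j : ZMod 3) ^ 2) ≠ 0 ∧
      (∑ j, (b j : ZMod 3)⁻¹ * (c j : ZMod 3)) ≠ 0) :
    HasNontrivialZero ℤ_[3] ((P : ℤ) ^ ι) L n b c := by
  by_cases hP9 : P % 9 = 1 ∨ P % 9 = 8
  · have hP : (P : ℤ) ≡ 1 [ZMOD 9] ∨ (P : ℤ) ≡ -1 [ZMOD 9] := by unfold Int.ModEq; omega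
    obtain ⟨z, hz⟩ := exists_pow_three_add_eq_zero_of_modEq_nine (Int.pow_modEq_one_or_neg_one hP ι)
    exact hasNontrivialZero_of_pow_three_add_eq_zero hn (by exact_mod_cast hz)
  · obtain ⟨hL, hB, hS⟩ := h2 hP9
    exact hasNontrivialZero_of_sum_inv_mul_ne_zero hL hB hS

theorem hasNontrivialZero_of_mod_three_eq_two {p P ι : ℕ} (hp : p.Prime) (hP : P = p ∨ P = 2 * p)
    (hl : l % 3 = 2) (hn : n ≠ 0) (hnodd : Odd n)
    (h1 : 2 ∣ P → (L : ZMod 2) = ∏ j, (b j : ZMod 2) ^ 2 ∧ (∏ j, (b j : ZMod 2) ^ 2) = 1)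
    (h3 : p % 3 = 2 →
      (L : ZMod p) = ∏ j, (b j : ZMod p) ^ 2 ∧ (∏ j, (b j : ZMod p) ^ 2) ≠ 0 ∧
      (∑ j, (b j : ZMod p)⁻¹ * (c j : ZMod p)) ≠ 0) :
    HasNontrivialZero ℤ_[l] ((P : ℤ) ^ ι) L n b c := by
  have hl' : l.Prime := Fact.out
  by_cases hlP : l ∣ P
  · have : l = p ∨ l = 2 := by
      rcases hP with rfl | rfl
      · exact .inl ((Nat.prime_dvd_prime_iff_eq hl' hp).1 hlP)
      · rcases (Nat.Prime.dvd_mul hl').1 hlP with h | h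
        · exact .inr ((Nat.prime_dvd_prime_iff_eq hl' Nat.prime_two).1 h)
        · exact .inl ((Nat.prime_dvd_prime_iff_eq hl' hp).1 h)
    rcases this with rfl | rfl
    · obtain ⟨hL, hB, hS⟩ := h3 hl
      exact hasNontrivialZero_of_sum_inv_mul_ne_zero hL hB hS
    · obtain ⟨hL, hB⟩ := h1 hlP
      exact hasNontrivialZero_of_prod_sq_ne_zero
        (by simpa [ZMod.natCast_eq_zero_iff_even] using hnodd) hL (hB ▸ one_ne_zero)
  · have ha : (((P : ℤ) ^ ι : ℤ) : ZMod l) ≠ 0 := by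
      push_cast
      exact pow_ne_zero _ (by rwa [Ne, ZMod.natCast_eq_zero_iff])
    obtain ⟨z, hz⟩ := exists_pow_three_add_eq_zero hl ha
    exact hasNontrivialZero_of_pow_three_add_eq_zero hn hz

end PadicInt

theorem local_solubility_general
    (n : ℕ) (hn5 : 5 ≤ n) (hnodd : Odd n)
    (p : ℕ) (hp : p.Prime)
    (P : ℕ) (hP : P = p ∨ P = 2 * p)
    (ι : ℕ)
    (b c : Fin ((n - 3) / 2) → ℤ) (L : ℤ)
    -- (1) if `P` is even then `L ≡ ∏_j b_j² ≡ 1 (mod 2)`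
    (h1 : 2 ∣ P → (L : ZMod 2) = ∏ j, (b j : ZMod 2) ^ 2 ∧ (∏ j, (b j : ZMod 2) ^ 2) = 1)
    -- (2) if `P ≢ ±1 (mod 9)` then `L ≡ ∏_j b_j² ≢ 0 (mod 3)` and `∑_j b_j⁻¹ c_j ≢ 0 (mod 3)`
    (h2 : ¬ (P % 9 = 1 ∨ P % 9 = 8) →
      (L : ZMod 3) = ∏ j, (b j : ZMod 3) ^ 2 ∧ (∏ j, (b j : ZMod 3) ^ 2) ≠ 0 ∧
      (∑ j, (b j : ZMod 3)⁻¹ * (c j : ZMod 3)) ≠ 0)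
    -- (3) if `p ≡ 2 (mod 3)` then `L ≡ ∏_j b_j² ≢ 0 (mod p)` and `∑_j b_j⁻¹ c_j ≢ 0 (mod p)`
    (h3 : p % 3 = 2 →
      (L : ZMod p) = ∏ j, (b j : ZMod p) ^ 2 ∧ (∏ j, (b j : ZMod p) ^ 2) ≠ 0 ∧
      (∑ j, (b j : ZMod p)⁻¹ * (c j : ZMod p)) ≠ 0) :
    (∃ X Y Z : ℝ, (X, Y, Z) ≠ (0, 0, 0) ∧ EqnHolds ((P : ℤ) ^ ι) L n b c X Y Z) ∧
    (∀ (l : ℕ) [Fact l.Prime], ∃ X Y Z : ℚ_[l], (X, Y, Z) ≠ (0, 0, 0) ∧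
      EqnHolds ((P : ℤ) ^ ι) L n b c X Y Z) := by
  have hn0 : n ≠ 0 := by omega
  refine ⟨?_, fun l _ => ?_⟩
  · obtain ⟨z, hz⟩ := Real.exists_pow_eq_of_odd (n := 3) (by decide) (-((P : ℤ) ^ ι : ℤ))
    exact hasNontrivialZero_of_pow_three_add_eq_zero hn0 (by rw [hz]; ring)
  · refine HasNontrivialZero.map (f := PadicInt.Coe.ringHom) ?_ Subtype.coe_injective
    have hl : l.Prime := Fact.out
    rcases (by omega : l % 3 = 0 ∨ l % 3 = 1 ∨ l % 3 = 2) with hl3 | hl3 | hl3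
    · obtain rfl : l = 3 :=
        ((Nat.prime_dvd_prime_iff_eq Nat.prime_three hl).1 (Nat.dvd_of_mod_eq_zero hl3)).symm
      exact PadicInt.hasNontrivialZero_three hn0 h2
    · exact PadicInt.hasNontrivialZero_of_mod_three_eq_one hl3 hn0 (by omega)
    · exact PadicInt.hasNontrivialZero_of_mod_three_eq_two hp hP hl3 hn0 hnodd h1 h3

/-- **Lemma 2.2** (local solubility). -/
theorem local_solubility
    (n : ℕ) (hn5 : 5 ≤ n) (hnodd : Odd n)
    (p : ℕ) (hp : p.Prime) (hpodd : Odd p)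
    (P : ℕ) (hP : P = p ∨ P = 2 * p)
    (ι : ℕ) (hι : ι = 1 ∨ ι = 2)
    (b c : Fin ((n - 3) / 2) → ℤ) (L : ℤ)
    -- (1) if `P` is even then `L ≡ ∏_j b_j² ≡ 1 (mod 2)`
    (h1 : 2 ∣ P → (L : ZMod 2) = ∏ j, (b j : ZMod 2) ^ 2 ∧ (∏ j, (b j : ZMod 2) ^ 2) = 1)
    -- (2) if `P ≢ ±1 (mod 9)` then `L ≡ ∏_j b_j² ≢ 0 (mod 3)` and `∑_j b_j⁻¹ c_j ≢ 0 (mod 3)`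
    (h2 : ¬ (P % 9 = 1 ∨ P % 9 = 8) →
      (L : ZMod 3) = ∏ j, (b j : ZMod 3) ^ 2 ∧ (∏ j, (b j : ZMod 3) ^ 2) ≠ 0 ∧
      (∑ j, (b j : ZMod 3)⁻¹ * (c j : ZMod 3)) ≠ 0)
    -- (3) if `p ≡ 2 (mod 3)` then `L ≡ ∏_j b_j² ≢ 0 (mod p)` and `∑_j b_j⁻¹ c_j ≢ 0 (mod p)`
    (h3 : p % 3 = 2 →
      (L : ZMod p) = ∏ j, (b j : ZMod p) ^ 2 ∧ (∏ j, (b j : ZMod p) ^ 2) ≠ 0 ∧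
      (∑ j, (b j : ZMod p)⁻¹ * (c j : ZMod p)) ≠ 0) :
    (∃ X Y Z : ℝ, (X, Y, Z) ≠ (0, 0, 0) ∧ EqnHolds ((P : ℤ) ^ ι) L n b c X Y Z) ∧
    (∀ (l : ℕ) [Fact l.Prime], ∃ X Y Z : ℚ_[l], (X, Y, Z) ≠ (0, 0, 0) ∧
      EqnHolds ((P : ℤ) ^ ι) L n b c X Y Z) :=
  local_solubility_general n hn5 hnodd p hp P hP ι b c L h1 h2 h3
end

section
/- Let n ≥ 3 be an odd integer and a, b_1, …, b_{(n−3)/2}, c_1, …, c_{(n−3)/2}, L integers such that: (1) a·b_j³ + c_j³ ≡ 2 (mod 3) is a prime number not dividing a, for every j; (2) every prime factor l of L satisfies l ≡ 2 (mod 3) and v_l(L) < n; (3) gcd(L, b_j c_j) = 1 for every j; (4) for every primitive triple (x,y,z) ∈ ℤ³ satisfying x³ + a y³ = L z^n, there exists a prime divisor l of L such that x ≡ y ≡ 0 (mod l). Then there is no triple (X,Y,Z) ∈ ℤ³ other than (0,0,0) satisfying (X³ + a Y³)·∏_{j=1}^{(n−3)/2}(b_j²X² + b_j c_j XY + c_j²Y²)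 = L Z^n. -/
/-!
Write `X = g x`, `Y = g y` with `x, y` coprime. Each quadratic factor `Q = b² x² + b c x y + c² y²`
is a norm from `ℤ[ω]`, where primes `≡ 2 (mod 3)` are inert, so such a prime divides `Q` only if
it divides both `b x` and `c y`. Hence `Q` is coprime to `L`, and, through the identity
`q y³ = b³ (x³ + a y³) - (b x - c y) Q` with `q = a b³ + c³`, also coprime to `x³ + a y³`.
Since no `n`-th power of a prime divides `L`, `g ∣ Z`; after cancelling `g ^ n`, `L` divides
`x³ + a y³` and the cofactor is an `n`-th power (`n` odd), which is a primitive solution of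
`x³ + a y³ = L z^n` with `x, y` coprime, contradicting hypothesis (4).
-/

theorem Int.isCoprime_iff_forall_prime_dvd {m n : ℤ} :
    IsCoprime m n ↔ ∀ p : ℕ, p.Prime → (p : ℤ) ∣ m → ¬ (p : ℤ) ∣ n := by
  simp only [Int.isCoprime_iff_nat_coprime, Int.natCast_dvd]
  exact ⟨fun h p hp hm hn => hp.not_dvd_one (h ▸ Nat.dvd_gcd hm hn), Nat.coprime_of_dvd⟩

theorem ZMod.eq_zero_of_sq_add_mul_add_sq_eq_zero {p : ℕ} [Fact p.Prime] (hp : p % 3 = 2)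
    {u v : ZMod p} (h : u ^ 2 + u * v + v ^ 2 = 0) : u = 0 ∧ v = 0 := by
  by_cases hv : v = 0
  · subst hv
    exact ⟨pow_eq_zero_iff two_ne_zero |>.1 (by simpa using h), rfl⟩
  exfalso
  set t := u / v
  have ht : t ^ 2 + t + 1 = 0 := by
    simp only [t]; field_simp; linear_combination h
  have ht0 : t ≠ 0 := fun h0 => by simp [h0] at ht
  -- `t` is a cube root of unity, but `p - 1 ≡ 1 (mod 3)` forces `t = t ^ (p - 1) = 1`.
  have ht1 : t = 1 := by
    obtain ⟨k, hk⟩ : ∃ k, p - 1 = 3 * k + 1 := ⟨p / 3, by omega⟩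
    have ht3 : t ^ 3 = 1 := by linear_combination (t - 1) * ht
    simpa [hk, pow_succ, pow_mul, ht3] using ZMod.pow_card_sub_one_eq_one ht0
  have h3 : ((3 : ℕ) : ZMod p) = 0 := by push_cast; linear_combination ht + (-t - 2) * ht1
  have := (Nat.prime_dvd_prime_iff_eq Fact.out Nat.prime_three).1
    ((ZMod.natCast_eq_zero_iff 3 p).1 h3)
  omega

theorem Int.natCast_dvd_of_dvd_sq_add_mul_add_sq {p : ℕ} (hp : p.Prime) (hp3 : p % 3 = 2)
    {u v : ℤ} (h : (p : ℤ) ∣ u ^ 2 + u * v + v ^ 2) : (p : ℤ) ∣ u ∧ (p : ℤ) ∣ v := by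
  have := Fact.mk hp
  simp only [← ZMod.intCast_zmod_eq_zero_iff_dvd] at h ⊢
  push_cast at h
  exact ZMod.eq_zero_of_sq_add_mul_add_sq_eq_zero hp3 h

/-- The norm of `b x - c y ω` in `ℤ[ω]`, `ω² + ω + 1 = 0`. -/
def quadForm (b c x y : ℤ) : ℤ := b ^ 2 * x ^ 2 + b * c * x * y + c ^ 2 * y ^ 2

theorem quadForm_mul_mul (b c x y g : ℤ) :
    quadForm b c (x * g) (y * g) = g ^ 2 * quadForm b c x y := by
  unfold quadForm; ring

theorem not_dvd_quadForm {p : ℕ} (hp : p.Prime) (hp3 : p % 3 = 2) {b c x y : ℤ}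
    (hb : ¬ (p : ℤ) ∣ b) (hc : ¬ (p : ℤ) ∣ c) (hxy : IsCoprime x y) :
    ¬ (p : ℤ) ∣ quadForm b c x y := by
  intro h
  obtain ⟨hbx, hcy⟩ := Int.natCast_dvd_of_dvd_sq_add_mul_add_sq hp hp3 (u := b * x) (v := c * y)
    (by convert h using 1; unfold quadForm; ring)
  exact Int.isCoprime_iff_forall_prime_dvd.1 hxy p hp
    ((Int.Prime.dvd_mul' hp hbx).resolve_left hb) ((Int.Prime.dvd_mul' hp hcy).resolve_left hc)

theorem isCoprime_quadForm {L b c x y : ℤ} (hL : ∀ l : ℕ, l.Prime → (l : ℤ) ∣ L → l % 3 = 2)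
    (hLbc : IsCoprime L (b * c)) (hxy : IsCoprime x y) : IsCoprime L (quadForm b c x y) := by
  refine Int.isCoprime_iff_forall_prime_dvd.2 fun l hl hlL => not_dvd_quadForm hl (hL l hl hlL)
    ?_ ?_ hxy
  · exact fun hlb => Int.isCoprime_iff_forall_prime_dvd.1 hLbc l hl hlL (hlb.mul_right c)
  · exact fun hlc => Int.isCoprime_iff_forall_prime_dvd.1 hLbc l hl hlL (hlc.mul_left b)

theorem isCoprime_of_prime_eq_mul_cube_add_cube {q a b c : ℤ} (hq : Prime q) (hqa : ¬ q ∣ a)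
    (h : q = a * b ^ 3 + c ^ 3) : IsCoprime q (b * c) := by
  have hsum : q ∣ a * b ^ 3 + c ^ 3 := h ▸ dvd_rfl
  have hb_of_c : q ∣ c → q ∣ b := fun hc => hq.dvd_of_dvd_pow <|
    (hq.dvd_or_dvd <| (dvd_add_left (dvd_pow hc three_ne_zero)).1 hsum).resolve_left hqa
  have hc_of_b : q ∣ b → q ∣ c := fun hb => hq.dvd_of_dvd_pow <|
    (dvd_add_right ((dvd_pow hb three_ne_zero).mul_left a)).1 hsum
  have hnot_both : ¬ (q ∣ b ∧ q ∣ c) := by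
    rintro ⟨⟨s, rfl⟩, ⟨t, rfl⟩⟩
    refine hq.not_dvd_one ⟨q * (a * s ^ 3 + t ^ 3), mul_left_cancel₀ hq.ne_zero ?_⟩
    linear_combination h
  rw [hq.coprime_iff_not_dvd]
  rintro hbc
  rcases hq.dvd_or_dvd hbc with hb | hc
  exacts [hnot_both ⟨hb, hc_of_b hb⟩, hnot_both ⟨hb_of_c hc, hc⟩]

theorem isCoprime_cube_add_mul_cube_quadForm {q : ℕ} (hq : q.Prime) (hq3 : q % 3 = 2)
    {a b c x y : ℤ} (hqa : ¬ (q : ℤ) ∣ a) (hqabc : (q : ℤ) = a * b ^ 3 + c ^ 3)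
    (hxy : IsCoprime x y) : IsCoprime (x ^ 3 + a * y ^ 3) (quadForm b c x y) := by
  have hqQ : IsCoprime (q : ℤ) (quadForm b c x y) := by
    refine isCoprime_quadForm (fun l hl hlq => ?_)
      (isCoprime_of_prime_eq_mul_cube_add_cube (Nat.prime_iff_prime_int.1 hq) hqa hqabc) hxy
    rwa [(Nat.prime_dvd_prime_iff_eq hl hq).1 (Int.natCast_dvd_natCast.1 hlq)]
  refine Int.isCoprime_iff_forall_prime_dvd.2 fun p hp hpC hpQ => ?_
  have hpqy : (p : ℤ) ∣ q * y ^ 3 := by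
    have hid : (q : ℤ) * y ^ 3 =
        b ^ 3 * (x ^ 3 + a * y ^ 3) - (b * x - c * y) * quadForm b c x y := by
      rw [hqabc]; unfold quadForm; ring
    exact hid ▸ dvd_sub (hpC.mul_left _) (hpQ.mul_left _)
  rcases Int.Prime.dvd_mul' hp hpqy with hpq | hpy3
  · exact Int.isCoprime_iff_forall_prime_dvd.1 hqQ p hp hpq hpQ
  have hpy := Int.Prime.dvd_pow' hp hpy3
  have hpx : (p : ℤ) ∣ x := Int.Prime.dvd_pow' (k := 3) hp <|
    (dvd_add_left ((dvd_pow hpy three_ne_zero).mul_left a)).1 hpC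
  exact Int.isCoprime_iff_forall_prime_dvd.1 hxy p hp hpx hpy

theorem Int.dvd_of_pow_dvd_mul_pow {n : ℕ} {L g Z : ℤ} (hL : ∀ p : ℕ, p.Prime → ¬ (p : ℤ) ^ n ∣ L)
    (hg : g ≠ 0) (h : g ^ n ∣ L * Z ^ n) : g ∣ Z := by
  obtain ⟨e, g', Z', he, hgZ, rfl, rfl⟩ := Int.exists_gcd_one' (Int.gcd_pos_of_ne_zero_left Z hg)
  have hg'L : g' ^ n ∣ L := by
    have h' : g' ^ n * (e : ℤ) ^ n ∣ L * Z' ^ n * (e : ℤ) ^ n := by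
      simpa only [mul_pow, mul_assoc] using h
    exact (Int.isCoprime_iff_gcd_eq_one.2 hgZ).pow.dvd_of_dvd_mul_right
      ((mul_dvd_mul_iff_right (pow_ne_zero n (by exact_mod_cast he.ne'))).1 h')
  have hg' : IsUnit g' := by
    rw [Int.isUnit_iff_natAbs_eq]
    by_contra hne
    obtain ⟨p, hp, hpg⟩ := Nat.exists_prime_and_dvd hne
    exact hL p hp ((pow_dvd_pow_of_dvd (Int.natCast_dvd.2 hpg) n).trans hg'L)
  exact mul_dvd_mul_right hg'.dvd _

theorem exists_eq_mul_pow_of_pow_mul_mul_eq_mul_pow {n : ℕ} (hn : Odd n) {L g C P Z : ℤ}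
    (hL : ∀ p : ℕ, p.Prime → ¬ (p : ℤ) ^ n ∣ L) (hg : g ≠ 0) (hLP : IsCoprime L P)
    (hCP : IsCoprime C P) (h : g ^ n * (C * P) = L * Z ^ n) : ∃ w, C = L * w ^ n := by
  have hL0 : L ≠ 0 := fun h0 => hL 2 Nat.prime_two (h0 ▸ dvd_zero _)
  obtain ⟨z, rfl⟩ := Int.dvd_of_pow_dvd_mul_pow hL hg ⟨_, h.symm⟩
  have hCPz : C * P = L * z ^ n :=
    mul_left_cancel₀ (pow_ne_zero n hg) (by rw [h]; ring)
  obtain ⟨C₁, rfl⟩ := hLP.dvd_of_dvd_mul_right ⟨_, hCPz⟩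
  have hC₁P : C₁ * P = z ^ n := mul_left_cancel₀ hL0 (by rw [← hCPz]; ring)
  obtain ⟨w, rfl⟩ := Int.eq_pow_of_mul_eq_pow_odd_left hCP.of_mul_left_right hn hC₁P
  exact ⟨w, rfl⟩

theorem cube_add_mul_cube_mul_prod_quadForm_mul_mul {ι : Type*} [Fintype ι] (a x y g : ℤ)
    (b c : ι → ℤ) :
    ((x * g) ^ 3 + a * (y * g) ^ 3) * ∏ j, quadForm (b j) (c j) (x * g) (y * g) =
      g ^ (3 + 2 * Fintype.card ι) * ((x ^ 3 + a * y ^ 3) * ∏ j, quadForm (b j) (c j) x y) := by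
  simp only [quadForm_mul_mul, Finset.prod_mul_distrib, Finset.prod_const, Finset.card_univ]
  ring

/-- **Lemma 2.3** (global unsolubility). -/
theorem global_unsolubility
    (n : ℕ) (hn3 : 3 ≤ n) (hnodd : Odd n)
    (a : ℤ) (b c : Fin ((n - 3) / 2) → ℤ) (L : ℤ)
    -- (1) `a b_j³ + c_j³ ≡ 2 (mod 3)` is a prime number not dividing `a`
    (h1 : ∀ j, ∃ q : ℕ, q.Prime ∧ q % 3 = 2 ∧ ¬ (q : ℤ) ∣ a ∧
      (q : ℤ) = a * b j ^ 3 + c j ^ 3)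
    -- (2) `L = ∏_{l ≡ 2 (mod 3)} l^{v_l(L)}` with `v_l(L) < n`
    (h2 : ∀ l : ℕ, l.Prime → (l : ℤ) ∣ L → l % 3 = 2 ∧ ¬ (l : ℤ) ^ n ∣ L)
    -- (3) `gcd(L, b_j c_j) = 1`
    (h3 : ∀ j, IsCoprime L (b j * c j))
    -- (4) every primitive solution of `x³ + a y³ = L z^n` has `x ≡ y ≡ 0 (mod l)` for
    --     some prime divisor `l` of `L`
    (h4 : ∀ x y z : ℤ, Int.gcd x (Int.gcd y z) = 1 →
      x ^ 3 + a * y ^ 3 = L * z ^ n →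
      ∃ l : ℕ, l.Prime ∧ (l : ℤ) ∣ L ∧ (l : ℤ) ∣ x ∧ (l : ℤ) ∣ y) :
    ∀ X Y Z : ℤ,
      (X ^ 3 + a * Y ^ 3) *
          ∏ j : Fin ((n - 3) / 2),
            (b j ^ 2 * X ^ 2 + b j * c j * X * Y + c j ^ 2 * Y ^ 2)
        = L * Z ^ n →
      X = 0 ∧ Y = 0 ∧ Z = 0 := by
  intro X Y Z hXYZ
  have hn0 : n ≠ 0 := by omega
  have hL : ∀ p : ℕ, p.Prime → ¬ (p : ℤ) ^ n ∣ L := fun p hp hpL =>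
    (h2 p hp ((dvd_pow_self _ hn0).trans hpL)).2 hpL
  suffices hXY : X = 0 ∧ Y = 0 by
    obtain ⟨rfl, rfl⟩ := hXY
    have hL0 : L ≠ 0 := fun h0 => hL 2 Nat.prime_two (h0 ▸ dvd_zero _)
    refine ⟨rfl, rfl, pow_eq_zero_iff hn0 |>.1 ((mul_eq_zero.1 ?_).resolve_left hL0)⟩
    rw [← hXYZ]; ring
  by_contra hXY
  obtain ⟨g, x, y, hg, hxy, rfl, rfl⟩ := Int.exists_gcd_one' (Int.gcd_pos_iff.2 (by tauto))
  replace hxy : IsCoprime x y := Int.isCoprime_iff_gcd_eq_one.2 hxy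
  have hCP : IsCoprime (x ^ 3 + a * y ^ 3) (∏ j, quadForm (b j) (c j) x y) :=
    IsCoprime.prod_right fun j _ => by
      obtain ⟨q, hq, hq3, hqa, hqabc⟩ := h1 j
      exact isCoprime_cube_add_mul_cube_quadForm hq hq3 hqa hqabc hxy
  have hLP : IsCoprime L (∏ j, quadForm (b j) (c j) x y) := IsCoprime.prod_right fun j _ =>
    isCoprime_quadForm (fun l hl hlL => (h2 l hl hlL).1) (h3 j) hxy
  have heq : (g : ℤ) ^ n * ((x ^ 3 + a * y ^ 3) * ∏ j, quadForm (b j) (c j) x y) = L * Z ^ n := by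
    have hcard : 3 + 2 * Fintype.card (Fin ((n - 3) / 2)) = n := by
      obtain ⟨k, rfl⟩ := hnodd
      rw [Fintype.card_fin]; omega
    rw [show (g : ℤ) ^ n = g ^ (3 + 2 * Fintype.card (Fin ((n - 3) / 2))) by rw [hcard],
      ← cube_add_mul_cube_mul_prod_quadForm_mul_mul]
    exact hXYZ
  obtain ⟨w, hw⟩ :=
    exists_eq_mul_pow_of_pow_mul_mul_eq_mul_pow hnodd hL (by positivity) hLP hCP heq
  have hprim : Int.gcd x (Int.gcd y w) = 1 :=
    Int.isCoprime_iff_gcd_eq_one.1 (hxy.of_isCoprime_of_dvd_right (Int.gcd_dvd_left _ _))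
  obtain ⟨l, hl, -, hlx, hly⟩ := h4 x y w hprim hw
  exact Int.isCoprime_iff_forall_prime_dvd.1 hxy l hl hlx hly
end

section
/- The element 4 + 2·7^{1/3} + 7^{2/3} of the ring ℤ[7^{1/3}] is the fundamental unit of the cubic field ℚ(7^{1/3}): it is a unit of the ring of integers ℤ[7^{1/3}], it is greater than 1, and it generates the unit group of ℤ[7^{1/3}] modulo the torsion subgroup {±1}. -/
/-
Writing `t = 7^{1/3}`, the norm of `x + y t + z t²` is the ternary cubic form
`N(x, y, z) = x³ + 7y³ + 49z³ - 21xyz`, which factors over `ℝ` as `u · A` where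
`4A = (2x - yt - zt²)² + 3(yt - zt²)²` is the squared modulus of a complex conjugate of `u`.
Descent modulo the prime `7` shows that `N` has no nontrivial zero, so `1, t, t²` are independent
and the norm is multiplicative on coordinates; hence a unit has norm `±1`.
A unit `1 < u < ε` would then have norm `1` and `A = 1/u < 1`, confining its coordinates to a
small box in which only `1` and `ε` have norm `1`. So `ε` is the least unit above `1`, and by the
Archimedean property every positive unit is a power of it.
-/

/-- The real cube root of a natural number. -/
noncomputable def cbrt (P : ℕ) : ℝ := (P : ℝ) ^ ((1 : ℝ) / 3)

/-- `u` belongs to the order `ℤ[P^{1/3}]` of `ℚ(P^{1/3})`. -/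
def InOrder (P : ℕ) (u : ℝ) : Prop :=
  ∃ x y z : ℤ, u = (x : ℝ) + (y : ℝ) * cbrt P + (z : ℝ) * (cbrt P) ^ 2

/-- `u` is a unit of the order `ℤ[P^{1/3}]`. -/
def IsUnitOfOrder (P : ℕ) (u : ℝ) : Prop :=
  InOrder P u ∧ ∃ v : ℝ, InOrder P v ∧ u * v = 1

/-- `ε` is the fundamental unit of `ℚ(P^{1/3})` (whose ring of integers is `ℤ[P^{1/3}]`
since `P ≢ ±1 mod 9`): the smallest unit greater than `1`, equivalently the generator
greater than `1` of the unit group modulo `±1`. -/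
def IsFundamentalUnit (P : ℕ) (ε : ℝ) : Prop :=
  IsUnitOfOrder P ε ∧ 1 < ε ∧ ∀ u : ℝ, IsUnitOfOrder P u → 1 < u → ε ≤ u

lemma cbrt_pow_three (P : ℕ) : cbrt P ^ 3 = P := by
  rw [cbrt, ← Real.rpow_natCast, ← Real.rpow_mul (Nat.cast_nonneg P)]
  norm_num

def normForm (P : ℕ) (x y z : ℤ) : ℤ :=
  x ^ 3 + P * y ^ 3 + P ^ 2 * z ^ 3 - 3 * P * x * y * z

section NormForm

variable (P : ℕ)

lemma normForm_mul (x y z p q r : ℤ) :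
    normForm P x y z * normForm P p q r =
      normForm P (x * p + P * (y * r + z * q)) (x * q + y * p + P * z * r)
        (x * r + y * q + z * p) := by
  unfold normForm; ring

lemma normForm_natCast_mul (a b c : ℤ) : normForm P (P * a) b c = P * normForm P b c a := by
  unfold normForm; ring

variable {P}

lemma normForm_natCast_mul_eq_zero (hP : P ≠ 0) {a b c : ℤ} :
    normForm P (P * a) b c = 0 ↔ normForm P b c a = 0 := by
  simp [normForm_natCast_mul, hP]

lemma Nat.Prime.dvd_of_normForm_eq_zero (hP : P.Prime) {a b c : ℤ} (h : normForm P a b c = 0) :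
    (P : ℤ) ∣ a :=
  (Nat.prime_iff_prime_int.mp hP).dvd_of_dvd_pow (n := 3)
    ⟨3 * a * b * c - b ^ 3 - P * c ^ 3, by unfold normForm at h; linear_combination h⟩

lemma Nat.Prime.exists_normForm_eq_zero_of_normForm_eq_zero (hP : P.Prime) {a b c : ℤ}
    (h : normForm P a b c = 0) :
    ∃ a' b' c', a = P * a' ∧ b = P * b' ∧ c = P * c' ∧ normForm P a' b' c' = 0 := by
  obtain ⟨a', rfl⟩ := hP.dvd_of_normForm_eq_zero h
  rw [normForm_natCast_mul_eq_zero hP.ne_zero] at h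
  obtain ⟨b', rfl⟩ := hP.dvd_of_normForm_eq_zero h
  rw [normForm_natCast_mul_eq_zero hP.ne_zero] at h
  obtain ⟨c', rfl⟩ := hP.dvd_of_normForm_eq_zero h
  rw [normForm_natCast_mul_eq_zero hP.ne_zero] at h
  exact ⟨a', b', c', rfl, rfl, rfl, h⟩

lemma Nat.Prime.pow_dvd_of_normForm_eq_zero (hP : P.Prime) (k : ℕ) :
    ∀ {a b c : ℤ}, normForm P a b c = 0 →
      (P : ℤ) ^ k ∣ a ∧ (P : ℤ) ^ k ∣ b ∧ (P : ℤ) ^ k ∣ c := by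
  induction k with
  | zero => intros; simp
  | succ k ih =>
    intro a b c h
    obtain ⟨a', b', c', rfl, rfl, rfl, h'⟩ := hP.exists_normForm_eq_zero_of_normForm_eq_zero h
    obtain ⟨ha, hb, hc⟩ := ih h'
    rw [_root_.pow_succ']
    exact ⟨mul_dvd_mul_left _ ha, mul_dvd_mul_left _ hb, mul_dvd_mul_left _ hc⟩

lemma Int.eq_zero_of_forall_pow_dvd {p a : ℤ} (hp : p.natAbs ≠ 1)
    (h : ∀ k : ℕ, p ^ k ∣ a) : a = 0 := by
  by_contra ha
  obtain ⟨k, hk⟩ := Int.finiteMultiplicity_iff.mpr ⟨hp, ha⟩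
  exact hk (h _)

lemma Nat.Prime.eq_zero_of_normForm_eq_zero (hP : P.Prime) {a b c : ℤ}
    (h : normForm P a b c = 0) : a = 0 ∧ b = 0 ∧ c = 0 := by
  have hP1 : (P : ℤ).natAbs ≠ 1 := by simpa using hP.ne_one
  exact ⟨Int.eq_zero_of_forall_pow_dvd hP1 fun k ↦ (hP.pow_dvd_of_normForm_eq_zero k h).1,
    Int.eq_zero_of_forall_pow_dvd hP1 fun k ↦ (hP.pow_dvd_of_normForm_eq_zero k h).2.1,
    Int.eq_zero_of_forall_pow_dvd hP1 fun k ↦ (hP.pow_dvd_of_normForm_eq_zero k h).2.2⟩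

end NormForm

section Order

variable {P : ℕ} {t : ℝ}

lemma coords_mul (ht : t ^ 3 = P) (x y z p q r : ℤ) :
    (x + y * t + z * t ^ 2) * (p + q * t + r * t ^ 2) =
      ((x * p + P * (y * r + z * q) : ℤ) : ℝ) + ((x * q + y * p + P * z * r : ℤ) : ℝ) * t +
        ((x * r + y * q + z * p : ℤ) : ℝ) * t ^ 2 := by
  push_cast
  linear_combination ((y * r + z * q : ℝ) + z * r * t) * ht

lemma normForm_eq_mul_adjugate (ht : t ^ 3 = P) (x y z : ℤ) :
    (normForm P x y z : ℝ) = (x + y * t + z * t ^ 2) *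
      ((x ^ 2 - P * y * z) + (P * z ^ 2 - x * y) * t + (y ^ 2 - x * z) * t ^ 2) := by
  unfold normForm
  push_cast
  linear_combination
    (-(y * (y ^ 2 - x * z) + z * (P * z ^ 2 - x * y)) - z * (y ^ 2 - x * z) * t : ℝ) * ht

lemma Nat.Prime.eq_zero_of_add_mul_cbrt_add_mul_cbrt_sq_eq_zero (hP : P.Prime) {x y z : ℤ}
    (h : x + y * cbrt P + z * cbrt P ^ 2 = 0) : x = 0 ∧ y = 0 ∧ z = 0 :=
  hP.eq_zero_of_normForm_eq_zero <| by
    have := normForm_eq_mul_adjugate (cbrt_pow_three P) x y z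
    rw [h, zero_mul] at this
    exact_mod_cast this

lemma Nat.Prime.coords_eq_of_add_mul_cbrt_add_mul_cbrt_sq_eq (hP : P.Prime) {x y z x' y' z' : ℤ}
    (h : x + y * cbrt P + z * cbrt P ^ 2 = x' + y' * cbrt P + z' * cbrt P ^ 2) :
    x = x' ∧ y = y' ∧ z = z' := by
  have := hP.eq_zero_of_add_mul_cbrt_add_mul_cbrt_sq_eq_zero (x := x - x') (y := y - y')
    (z := z - z') (by push_cast; linear_combination h)
  omega

namespace InOrder

lemma one : InOrder P 1 := ⟨1, 0, 0, by simp⟩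

lemma mul {u v : ℝ} (hu : InOrder P u) (hv : InOrder P v) : InOrder P (u * v) := by
  obtain ⟨x, y, z, rfl⟩ := hu
  obtain ⟨p, q, r, rfl⟩ := hv
  exact ⟨_, _, _, coords_mul (cbrt_pow_three P) x y z p q r⟩

lemma neg {u : ℝ} (hu : InOrder P u) : InOrder P (-u) := by
  obtain ⟨x, y, z, rfl⟩ := hu
  exact ⟨-x, -y, -z, by push_cast; ring⟩

end InOrder

namespace IsUnitOfOrder

lemma one : IsUnitOfOrder P 1 := ⟨.one, 1, .one, one_mul 1⟩

lemma ne_zero {u : ℝ} (hu : IsUnitOfOrder P u) : u ≠ 0 := by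
  rintro rfl
  obtain ⟨-, v, -, h⟩ := hu
  simp at h

lemma mul {u v : ℝ} (hu : IsUnitOfOrder P u) (hv : IsUnitOfOrder P v) :
    IsUnitOfOrder P (u * v) := by
  obtain ⟨hu, u', hu', huu'⟩ := hu
  obtain ⟨hv, v', hv', hvv'⟩ := hv
  exact ⟨hu.mul hv, u' * v', hu'.mul hv', by rw [mul_mul_mul_comm, huu', hvv', one_mul]⟩

lemma inv {u : ℝ} (hu : IsUnitOfOrder P u) : IsUnitOfOrder P u⁻¹ := by
  obtain ⟨hu, v, hv, huv⟩ := hu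
  rw [← eq_inv_of_mul_eq_one_right huv]
  exact ⟨hv, u, hu, by rw [mul_comm, huv]⟩

lemma neg {u : ℝ} (hu : IsUnitOfOrder P u) : IsUnitOfOrder P (-u) := by
  obtain ⟨hu, v, hv, huv⟩ := hu
  exact ⟨hu.neg, -v, hv.neg, by rw [neg_mul_neg, huv]⟩

lemma pow {u : ℝ} (hu : IsUnitOfOrder P u) (n : ℕ) : IsUnitOfOrder P (u ^ n) := by
  induction n with
  | zero => simpa using one
  | succ n ih => simpa [pow_succ] using ih.mul hu

lemma zpow {u : ℝ} (hu : IsUnitOfOrder P u) : ∀ k : ℤ, IsUnitOfOrder P (u ^ k)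
  | .ofNat n => by simpa using hu.pow n
  | .negSucc n => by simpa [zpow_negSucc] using (hu.pow (n + 1)).inv

lemma isUnit_normForm (hP : P.Prime) {u : ℝ} (hu : IsUnitOfOrder P u) {x y z : ℤ}
    (hxyz : u = x + y * cbrt P + z * cbrt P ^ 2) : IsUnit (normForm P x y z) := by
  obtain ⟨-, v, ⟨p, q, r, rfl⟩, huv⟩ := hu
  rw [hxyz, coords_mul (cbrt_pow_three P)] at huv
  obtain ⟨h1, h2, h3⟩ := hP.coords_eq_of_add_mul_cbrt_add_mul_cbrt_sq_eq (x' := 1) (y' := 0)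
    (z' := 0) (huv.trans (by simp))
  refine IsUnit.of_mul_eq_one (normForm P p q r) ?_
  rw [normForm_mul, h1, h2, h3]
  simp [normForm]

end IsUnitOfOrder

end Order

lemma IsFundamentalUnit.exists_eq_zpow_of_pos {P : ℕ} {ε u : ℝ} (hε : IsFundamentalUnit P ε)
    (hu : IsUnitOfOrder P u) (hu0 : 0 < u) : ∃ k : ℤ, u = ε ^ k := by
  obtain ⟨hε, hε1, hmin⟩ := hε
  obtain ⟨k, hk, hk'⟩ := exists_mem_Ico_zpow hu0 hε1
  have hεk : 0 < ε ^ k := zpow_pos (zero_lt_one.trans hε1) k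
  have hq : IsUnitOfOrder P (u / ε ^ k) := hu.mul (hε.zpow k).inv
  have hq1 : 1 ≤ u / ε ^ k := (one_le_div hεk).mpr hk
  have hqε : u / ε ^ k < ε := by
    rwa [div_lt_iff₀ hεk, mul_comm, ← zpow_add_one₀ (zero_lt_one.trans hε1).ne']
  refine ⟨k, (div_eq_one_iff_eq hεk.ne').mp (hq1.eq_or_lt.resolve_right fun h ↦ ?_).symm⟩
  exact (hmin _ hq h).not_gt hqε

lemma IsFundamentalUnit.exists_eq_zpow_or_eq_neg_zpow {P : ℕ} {ε u : ℝ}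
    (hε : IsFundamentalUnit P ε) (hu : IsUnitOfOrder P u) :
    ∃ k : ℤ, u = ε ^ k ∨ u = -ε ^ k := by
  rcases hu.ne_zero.lt_or_gt with hneg | hpos
  · obtain ⟨k, hk⟩ := hε.exists_eq_zpow_of_pos hu.neg (neg_pos.mpr hneg)
    exact ⟨k, .inr (neg_eq_iff_eq_neg.mp hk)⟩
  · obtain ⟨k, hk⟩ := hε.exists_eq_zpow_of_pos hu hpos
    exact ⟨k, .inl hk⟩

lemma normForm_eq_one_and_normSq_conj_lt_one_of_one_lt {P : ℕ} {t : ℝ} (ht : t ^ 3 = P)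
    {x y z : ℤ} (hN : IsUnit (normForm P x y z)) (hu : 1 < x + y * t + z * t ^ 2) :
    normForm P x y z = 1 ∧ (2 * x - y * t - z * t ^ 2) ^ 2 + 3 * (y * t - z * t ^ 2) ^ 2 < 4 := by
  set u : ℝ := x + y * t + z * t ^ 2
  set A : ℝ := (x ^ 2 - P * y * z) + (P * z ^ 2 - x * y) * t + (y ^ 2 - x * z) * t ^ 2
  have hNA : (normForm P x y z : ℝ) = u * A := normForm_eq_mul_adjugate ht x y z
  -- `A` is the squared modulus of a complex conjugate of `u`
  have hA : 4 * A = (2 * x - y * t - z * t ^ 2) ^ 2 + 3 * (y * t - z * t ^ 2) ^ 2 := by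
    linear_combination (4 * y * z - 4 * z ^ 2 * t : ℝ) * ht
  have hA0 : 0 ≤ A := by
    nlinarith [sq_nonneg (2 * x - y * t - z * t ^ 2), sq_nonneg (y * t - z * t ^ 2)]
  have hN1 : normForm P x y z = 1 := by
    rcases Int.isUnit_iff.mp hN with h | h
    · exact h
    · rw [h, Int.cast_neg, Int.cast_one] at hNA
      nlinarith [mul_nonneg (zero_le_one.trans hu.le) hA0]
  rw [hN1, Int.cast_one] at hNA
  exact ⟨hN1, by nlinarith⟩

local notation "ε₇" => 4 + 2 * cbrt 7 + cbrt 7 ^ 2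

lemma cbrt_seven_mem_Ioo : 1.91 < cbrt 7 ∧ cbrt 7 < 1.92 := by
  have h := cbrt_pow_three 7
  have h0 : 0 < cbrt 7 := Real.rpow_pos_of_pos (by norm_num) _
  push_cast at h
  constructor <;> nlinarith [sq_nonneg (cbrt 7 - 1.91), sq_nonneg (cbrt 7 - 1.92)]

lemma isUnitOfOrder_seven : IsUnitOfOrder 7 ε₇ :=
  ⟨⟨4, 2, 1, by push_cast; ring⟩, 2 - cbrt 7, ⟨2, -1, 0, by push_cast; ring⟩, by
    linear_combination -cbrt_pow_three 7⟩

lemma normForm_seven_eq_one {x y z : ℤ} (hx : 0 ≤ x ∧ x ≤ 4) (hy : 0 ≤ y ∧ y ≤ 2)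
    (hz : 0 ≤ z ∧ z ≤ 1) (h : normForm 7 x y z = 1) :
    (x = 1 ∧ y = 0 ∧ z = 0) ∨ (x = 4 ∧ y = 2 ∧ z = 1) := by
  obtain ⟨hx0, hx4⟩ := hx
  obtain ⟨hy0, hy2⟩ := hy
  obtain ⟨hz0, hz1⟩ := hz
  unfold normForm at h
  interval_cases x <;> interval_cases y <;> interval_cases z <;> omega

lemma coords_mem_box {x y z : ℤ} (hu : 1 < x + y * cbrt 7 + z * cbrt 7 ^ 2)
    (huε : x + y * cbrt 7 + z * cbrt 7 ^ 2 < ε₇)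
    (hsq : (2 * x - y * cbrt 7 - z * cbrt 7 ^ 2) ^ 2 + 3 * (y * cbrt 7 - z * cbrt 7 ^ 2) ^ 2 < 4) :
    (0 ≤ x ∧ x ≤ 4) ∧ (0 ≤ y ∧ y ≤ 2) ∧ (0 ≤ z ∧ z ≤ 1) := by
  obtain ⟨ht, ht'⟩ := cbrt_seven_mem_Ioo
  set t := cbrt 7
  set B : ℝ := 2 * x - y * t - z * t ^ 2
  set w : ℝ := y * t - z * t ^ 2
  have hB : -2 < B ∧ B < 2 := by
    constructor <;> nlinarith [sq_nonneg w, sq_nonneg (B - 2), sq_nonneg (B + 2)]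
  have hw : -1.16 < w ∧ w < 1.16 := by
    constructor <;> nlinarith [sq_nonneg B, sq_nonneg (w - 1.16), sq_nonneg (w + 1.16)]
  have hx : (-1 : ℝ) < x ∧ (x : ℝ) < 5 := by constructor <;> nlinarith
  have hy : (-1 : ℝ) < y ∧ (y : ℝ) < 3 := by constructor <;> nlinarith
  have hz : (-1 : ℝ) < z ∧ (z : ℝ) < 2 := by constructor <;> nlinarith
  norm_cast at hx hy hz
  omega

lemma isFundamentalUnit_seven : IsFundamentalUnit 7 ε₇ := by
  refine ⟨isUnitOfOrder_seven, by nlinarith [cbrt_seven_mem_Ioo], fun u hu hu1 ↦ ?_⟩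
  by_contra! huε
  obtain ⟨x, y, z, rfl⟩ := hu.1
  obtain ⟨hN, hsq⟩ := normForm_eq_one_and_normSq_conj_lt_one_of_one_lt (cbrt_pow_three 7)
    (hu.isUnit_normForm (by norm_num) rfl) hu1
  obtain ⟨hx, hy, hz⟩ := coords_mem_box hu1 huε hsq
  rcases normForm_seven_eq_one hx hy hz hN with ⟨rfl, rfl, rfl⟩ | ⟨rfl, rfl, rfl⟩
  · norm_num at hu1
  · norm_num at huε

/-- `4 + 2·7^{1/3} + 7^{2/3}` is the fundamental unit of `ℚ(7^{1/3})`: it is a unit of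
the ring of integers `ℤ[7^{1/3}]`, it is greater than `1`, and every unit of
`ℤ[7^{1/3}]` is of the form `± ε^k` with `k ∈ ℤ`. -/
theorem fundamental_unit_seven :
    IsUnitOfOrder 7 (4 + 2 * cbrt 7 + (cbrt 7) ^ 2) ∧
    1 < 4 + 2 * cbrt 7 + (cbrt 7) ^ 2 ∧
    ∀ u : ℝ, IsUnitOfOrder 7 u →
      ∃ k : ℤ, u = (4 + 2 * cbrt 7 + (cbrt 7) ^ 2) ^ k ∨
        u = -(4 + 2 * cbrt 7 + (cbrt 7) ^ 2) ^ k :=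
  ⟨isFundamentalUnit_seven.1, isFundamentalUnit_seven.2.1,
    fun _ hu ↦ isFundamentalUnit_seven.exists_eq_zpow_or_eq_neg_zpow hu⟩
end
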